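/- arXiv:1311.3469 — 4 statements merged into one kernel-verified Lean document; each statement's English description precedes it below -/
import Mathlib

section
/- Ramanujan's mock theta function φ satisfies the identity ∑_{n≥0} q^{n²}/(-q²;q²)_n = 1 + ∑_{n≥0} (-1)^n q^{2n+1} (q;q²)_n for all complex q with |q| < 1. -/
/-!
For `k ≥ 0`, expanding `1 / (-q²; q²)_{k+1}` with the generating function
`∑ₙ [n, k]_Q tⁿ = tᵏ / (t; Q)_{k+1}` of Gaussian binomials writes the `(k+1)`-st term of the
Eulerian form as the row sum `∑ₙ (-1)ᵏ q^{k²+1} [n, k]_{q²} (-q²)ⁿ` (`phiArray`). Summing this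
array by columns instead, the q-binomial theorem `(z; Q)ₙ = ∑ₖ (-z)ᵏ Q^{k(k-1)/2} [n, k]_Q`
collapses column `n` to `(-1)ⁿ q^{2n+1} (q; q²)ₙ`. The interchange is legitimate because the
array is absolutely summable: `|[n, k]_Q| ≤ C(n, k)` when `|Q| ≤ 1`, which bounds the absolute
row sums by `|q|^{(k+1)²} / (1 - |q|²)^{k+1}`, summable thanks to the quadratic exponent.
-/

open scoped Real

/-- The q-Pochhammer symbol `(a;b)_n = ∏_{j=0}^{n-1} (1 - a b^j)`. -/
noncomputable def qPoch (a b : ℂ) (n : ℕ) : ℂ := ∏ j ∈ Finset.range n, (1 - a * b ^ j)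

open Finset Filter

/-- The Gaussian binomial coefficient `[n, k]_Q`. -/
def gaussBinom {R : Type*} [Semiring R] (Q : R) : ℕ → ℕ → R
  | _, 0 => 1
  | 0, _ + 1 => 0
  | n + 1, k + 1 => gaussBinom Q n k + Q ^ (k + 1) * gaussBinom Q n (k + 1)

section gaussBinom

variable {R : Type*} [Semiring R] (Q : R)

@[simp] lemma gaussBinom_zero_right (n : ℕ) : gaussBinom Q n 0 = 1 := by cases n <;> rfl

@[simp] lemma gaussBinom_zero_succ (k : ℕ) : gaussBinom Q 0 (k + 1) = 0 := rfl

lemma gaussBinom_succ_succ (n k : ℕ) :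
    gaussBinom Q (n + 1) (k + 1) = gaussBinom Q n k + Q ^ (k + 1) * gaussBinom Q n (k + 1) :=
  rfl

lemma gaussBinom_eq_zero_of_lt {n k : ℕ} (h : n < k) : gaussBinom Q n k = 0 := by
  induction n generalizing k with
  | zero => obtain ⟨k, rfl⟩ := Nat.exists_eq_add_one_of_ne_zero (by omega : k ≠ 0); rfl
  | succ n ih =>
    obtain ⟨k, rfl⟩ := Nat.exists_eq_add_one_of_ne_zero (by omega : k ≠ 0)
    rw [gaussBinom_succ_succ, ih (by omega), ih (by omega), mul_zero, add_zero]

end gaussBinom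

/-- Rothe's q-binomial theorem. -/
theorem prod_one_sub_mul_pow_eq_sum_gaussBinom {R : Type*} [CommRing R] (Q : R) (n : ℕ) (z : R) :
    ∏ j ∈ range n, (1 - z * Q ^ j) =
      ∑ k ∈ range (n + 1), (-z) ^ k * Q ^ k.choose 2 * gaussBinom Q n k := by
  induction n generalizing z with
  | zero => simp
  | succ n ih =>
    set S := ∑ k ∈ range (n + 1), (-z) ^ k * Q ^ (k + 1).choose 2 * gaussBinom Q n k with hS
    have peel : ∏ j ∈ range (n + 1), (1 - z * Q ^ j) =
        (1 - z) * ∏ j ∈ range n, (1 - z * Q * Q ^ j) := by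
      rw [prod_range_succ', pow_zero, mul_one, mul_comm]
      simp only [pow_succ', mul_assoc]
    have ih' : ∏ j ∈ range n, (1 - z * Q * Q ^ j) = S := by
      refine (ih _).trans (sum_congr rfl fun k _ ↦ ?_)
      rw [Nat.choose_succ_succ', Nat.choose_one_right, pow_add]
      ring
    have pascal (k : ℕ) : (-z) ^ (k + 1) * Q ^ (k + 1).choose 2 * gaussBinom Q (n + 1) (k + 1) =
        -z * ((-z) ^ k * Q ^ (k + 1).choose 2 * gaussBinom Q n k) +
          (-z) ^ (k + 1) * Q ^ (k + 2).choose 2 * gaussBinom Q n (k + 1) := by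
      rw [gaussBinom_succ_succ, Nat.choose_succ_succ' (k + 1), Nat.choose_one_right, pow_add]
      ring
    have shifted : ∑ k ∈ range (n + 1), (-z) ^ (k + 1) * Q ^ (k + 2).choose 2 *
        gaussBinom Q n (k + 1) + 1 = S := by
      rw [hS, sum_range_succ' (fun k ↦ (-z) ^ k * Q ^ (k + 1).choose 2 * gaussBinom Q n k),
        sum_range_succ, gaussBinom_eq_zero_of_lt Q (Nat.lt_succ_self n)]
      simp
    rw [peel, ih', sum_range_succ', sum_congr rfl fun k _ ↦ pascal k, sum_add_distrib,
      ← mul_sum]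
    simp only [pow_zero, Nat.choose_zero_succ, gaussBinom_zero_right, mul_one]
    linear_combination -shifted

lemma hasSum_choose_mul_pow {𝕜 : Type*} [NormedDivisionRing 𝕜] {x : 𝕜} (hx : ‖x‖ < 1) (k : ℕ) :
    HasSum (fun n ↦ (n.choose k : 𝕜) * x ^ n) (x ^ k / (1 - x) ^ (k + 1)) := by
  rw [← hasSum_nat_add_iff' k, sum_eq_zero fun i hi ↦ by
    rw [Nat.choose_eq_zero_of_lt (mem_range.1 hi), Nat.cast_zero, zero_mul]]
  rw [sub_zero, ← mul_one_div]
  refine ((hasSum_choose_mul_geometric_of_norm_lt_one k hx).mul_left (x ^ k)).congr_fun fun n ↦ ?_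
  rw [pow_add, ← mul_assoc]
  exact ((Nat.cast_commute _ (x ^ k)).symm.mul_right (Commute.pow_pow_self x k n)).eq.symm

section GeneratingFunction

variable {𝕜 : Type*} [NormedField 𝕜] {Q t : 𝕜}

lemma norm_gaussBinom_le_choose (hQ : ‖Q‖ ≤ 1) (n k : ℕ) : ‖gaussBinom Q n k‖ ≤ n.choose k := by
  induction n generalizing k with
  | zero => cases k <;> simp
  | succ n ih =>
    cases k with
    | zero => simp
    | succ k =>
      rw [gaussBinom_succ_succ, Nat.choose_succ_succ, Nat.cast_add]
      refine (norm_add_le _ _).trans (add_le_add (ih k) ?_)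
      rw [norm_mul, norm_pow]
      exact (mul_le_of_le_one_left (norm_nonneg _) (pow_le_one₀ (norm_nonneg Q) hQ)).trans
        (ih (k + 1))

variable [CompleteSpace 𝕜]

lemma summable_gaussBinom_mul_pow (hQ : ‖Q‖ ≤ 1) (ht : ‖t‖ < 1) (k : ℕ) :
    Summable fun n ↦ gaussBinom Q n k * t ^ n := by
  have ht' : ‖‖t‖‖ < 1 := by rwa [norm_norm]
  refine .of_norm_bounded (hasSum_choose_mul_pow ht' k).summable fun n ↦ ?_
  rw [norm_mul, norm_pow]
  gcongr
  exact norm_gaussBinom_le_choose hQ n k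

theorem hasSum_gaussBinom_mul_pow (hQ : ‖Q‖ ≤ 1) (ht : ‖t‖ < 1) (k : ℕ) :
    HasSum (fun n ↦ gaussBinom Q n k * t ^ n) (t ^ k / ∏ j ∈ range (k + 1), (1 - t * Q ^ j)) := by
  have factor_ne_zero (j : ℕ) : 1 - t * Q ^ j ≠ 0 := by
    refine (isUnit_one_sub_of_norm_lt_one ?_).ne_zero
    rw [norm_mul, norm_pow]
    exact mul_lt_one_of_nonneg_of_lt_one_left (norm_nonneg t) ht (pow_le_one₀ (norm_nonneg Q) hQ)
  induction k with
  | zero => simpa using hasSum_geometric_of_norm_lt_one ht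
  | succ k ih =>
    obtain ⟨T, hT⟩ := summable_gaussBinom_mul_pow hQ ht (k + 1)
    have shifted : HasSum (fun n ↦ gaussBinom Q (n + 1) (k + 1) * t ^ (n + 1))
        (t * (t ^ k / ∏ j ∈ range (k + 1), (1 - t * Q ^ j)) + t * Q ^ (k + 1) * T) := by
      refine ((ih.mul_left t).add (hT.mul_left (t * Q ^ (k + 1)))).congr_fun fun n ↦ ?_
      rw [gaussBinom_succ_succ, pow_succ]
      ring
    have recursion := hT.unique (shifted.zero_add (f := fun n ↦ gaussBinom Q n (k + 1) * t ^ n))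
    rw [gaussBinom_zero_succ, zero_mul, zero_add] at recursion
    convert hT using 1
    rw [prod_range_succ, pow_succ', ← div_div, mul_div_assoc, div_eq_iff (factor_ne_zero _)]
    linear_combination -recursion

end GeneratingFunction

lemma add_two_mul_choose_two (k : ℕ) : k + 2 * k.choose 2 = k ^ 2 := by
  induction k with
  | zero => rfl
  | succ k ih => rw [Nat.choose_succ_succ', Nat.choose_one_right]; nlinarith [ih]

lemma summable_pow_sq_div_pow {r s : ℝ} (hr₀ : 0 ≤ r) (hr₁ : r < 1) (hs : 0 < s) :
    Summable fun k : ℕ ↦ r ^ (k ^ 2) / s ^ k := by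
  have small : ∀ᶠ k : ℕ in atTop, r ^ k / s ≤ 1 / 2 :=
    ((tendsto_pow_atTop_nhds_zero_of_lt_one hr₀ hr₁).div_const s).eventually_le_const
      (by rw [zero_div]; norm_num)
  refine .of_norm_bounded_eventually_nat summable_geometric_two ?_
  filter_upwards [small] with k hk
  rw [Real.norm_of_nonneg (by positivity), sq, pow_mul, ← div_pow]
  exact pow_le_pow_left₀ (by positivity) hk k

noncomputable def phiArray (q : ℂ) (k n : ℕ) : ℂ :=
  (-1) ^ k * q ^ (k ^ 2 + 1) * (gaussBinom (q ^ 2) n k * (-q ^ 2) ^ n)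

section phiArray

variable {q : ℂ}

lemma hasSum_phiArray_row (hq : ‖q‖ < 1) (k : ℕ) :
    HasSum (phiArray q k) (q ^ ((k + 1) ^ 2) / qPoch (-q ^ 2) (q ^ 2) (k + 1)) := by
  have hq2 : ‖q ^ 2‖ < 1 := by rw [norm_pow]; exact pow_lt_one₀ (norm_nonneg q) hq two_ne_zero
  have h := (hasSum_gaussBinom_mul_pow hq2.le (by rwa [norm_neg]) k).mul_left
    ((-1) ^ k * q ^ (k ^ 2 + 1))
  have value : (-1) ^ k * q ^ (k ^ 2 + 1) *
      ((-q ^ 2) ^ k / ∏ j ∈ range (k + 1), (1 - -q ^ 2 * (q ^ 2) ^ j)) =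
      q ^ ((k + 1) ^ 2) / qPoch (-q ^ 2) (q ^ 2) (k + 1) := by
    rw [qPoch, mul_div_assoc', neg_pow (q ^ 2), ← pow_mul, mul_mul_mul_comm, ← mul_pow,
      neg_one_mul, neg_neg, one_pow, one_mul, ← pow_add]
    ring_nf
  rw [value] at h
  exact h

lemma hasSum_phiArray_col (n : ℕ) :
    HasSum (fun k ↦ phiArray q k n) ((-1) ^ n * q ^ (2 * n + 1) * qPoch q (q ^ 2) n) := by
  have vanish (k : ℕ) (hk : k ∉ range (n + 1)) : phiArray q k n = 0 := by
    rw [phiArray, gaussBinom_eq_zero_of_lt _ (by simpa using hk), zero_mul, mul_zero]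
  have value : ∑ k ∈ range (n + 1), phiArray q k n =
      (-1) ^ n * q ^ (2 * n + 1) * qPoch q (q ^ 2) n := by
    rw [qPoch, prod_one_sub_mul_pow_eq_sum_gaussBinom, mul_sum]
    refine sum_congr rfl fun k _ ↦ ?_
    rw [phiArray, ← add_two_mul_choose_two k, neg_pow q, neg_pow (q ^ 2), ← pow_mul, ← pow_mul]
    ring
  rw [← value]
  exact hasSum_sum_of_ne_finset_zero vanish

lemma norm_phiArray_le (hq : ‖q‖ ≤ 1) (k n : ℕ) :
    ‖phiArray q k n‖ ≤ ‖q‖ ^ (k ^ 2 + 1) * (n.choose k * (‖q‖ ^ 2) ^ n) := by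
  simp only [phiArray, norm_mul, norm_pow, norm_neg, norm_one, one_pow, one_mul]
  gcongr
  exact norm_gaussBinom_le_choose (by rw [norm_pow]; exact pow_le_one₀ (norm_nonneg q) hq) n k

lemma summable_phiArray (hq : ‖q‖ < 1) : Summable (Function.uncurry (phiArray q)) := by
  have hr₂ : ‖q‖ ^ 2 < 1 := pow_lt_one₀ (norm_nonneg q) hq two_ne_zero
  have row (k : ℕ) : HasSum (fun n ↦ ‖q‖ ^ (k ^ 2 + 1) * (n.choose k * (‖q‖ ^ 2) ^ n))
      (‖q‖ ^ ((k + 1) ^ 2) / (1 - ‖q‖ ^ 2) ^ (k + 1)) := by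
    have h := (hasSum_choose_mul_pow (x := ‖q‖ ^ 2)
      (by rwa [Real.norm_of_nonneg (by positivity)]) k).mul_left (‖q‖ ^ (k ^ 2 + 1))
    rwa [mul_div_assoc', ← pow_mul, ← pow_add, show k ^ 2 + 1 + 2 * k = (k + 1) ^ 2 by ring] at h
  refine .of_norm_bounded
    (g := fun p ↦ ‖q‖ ^ (p.1 ^ 2 + 1) * (p.2.choose p.1 * (‖q‖ ^ 2) ^ p.2)) ?_
    fun p ↦ norm_phiArray_le hq.le p.1 p.2
  rw [summable_prod_of_nonneg fun p ↦ by positivity]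
  refine ⟨fun k ↦ (row k).summable, ?_⟩
  simp only [(row _).tsum_eq]
  exact (summable_nat_add_iff 1).2
    (summable_pow_sq_div_pow (norm_nonneg q) hq (by linarith : (0 : ℝ) < 1 - ‖q‖ ^ 2))

end phiArray

theorem phi_eulerian_eq_alt (q : ℂ) (hq : ‖q‖ < 1) :
    ∑' n : ℕ, q ^ (n ^ 2) / qPoch (-q ^ 2) (q ^ 2) n
      = 1 + ∑' n : ℕ, (-1 : ℂ) ^ n * q ^ (2 * n + 1) * qPoch q (q ^ 2) n := by
  obtain ⟨S, hS⟩ := summable_phiArray hq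
  have rows := hS.prod_fiberwise (hasSum_phiArray_row hq)
  have cols := ((Equiv.prodComm ℕ ℕ).hasSum_iff.mpr hS).prod_fiberwise hasSum_phiArray_col
  have eulerian : HasSum (fun n ↦ q ^ (n ^ 2) / qPoch (-q ^ 2) (q ^ 2) n) (1 + S) := by
    simpa [qPoch] using rows.zero_add (f := fun n ↦ q ^ (n ^ 2) / qPoch (-q ^ 2) (q ^ 2) n)
  rw [eulerian.tsum_eq, cols.tsum_eq]
end

section
/- Ramanujan's mock theta function ψ satisfies the identity ∑_{n≥1} q^{n²}/(q;q²)_n = ∑_{n≥0} q^{n+1} (-q²;q²)_n for all complex q with |q| < 1. -/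
/-!
Both sides are iterated sums of the absolutely convergent double series
`∑_{n,k} q^{n+1} e_k(q², q⁴, …, q^{2n})`, with `e_k` the elementary symmetric polynomial.
Summing over `k` first gives `q^{n+1} (-q²;q²)_n`, since `∑_k e_k(y) = ∏_j (1 + y_j)`.
Summing over `n` first, the recurrence `e_{k+1}(x, …, x^{n+1}) = x^{k+1} (e_k + e_{k+1})(x, …, xⁿ)`
gives `(1 - z x^{k+1}) F_{k+1} = z x^{k+1} F_k` for `F_k = ∑_n zⁿ e_k(x, …, xⁿ)`, hence
`F_k = z^k x^{k(k+1)/2} / (z;x)_{k+1}`,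
which is `q^{(k+1)² - 1} / (q;q²)_{k+1}` at `z = q`, `x = q²`.
Absolute convergence holds because `∑_k ‖e_k(x, …, xⁿ)‖ ≤ ∏_j (1 + ‖x‖^j)` is bounded in `n`.
-/

open scoped Real

open Finset

/-- `esymmPow x n k = e_k(x, x², …, xⁿ) = x^{k(k+1)/2} [n choose k]_x`. -/
def esymmPow {R : Type*} [CommSemiring R] (x : R) : ℕ → ℕ → R
  | _, 0 => 1
  | 0, _ + 1 => 0
  | n + 1, k + 1 => esymmPow x n (k + 1) + x ^ (n + 1) * esymmPow x n k

section CommSemiring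

variable {R : Type*} [CommSemiring R] (x : R)

@[simp]
lemma esymmPow_zero_right (n : ℕ) : esymmPow x n 0 = 1 := by
  cases n <;> rfl

@[simp]
lemma esymmPow_zero_succ (k : ℕ) : esymmPow x 0 (k + 1) = 0 := rfl

lemma esymmPow_succ_succ (n k : ℕ) :
    esymmPow x (n + 1) (k + 1) = esymmPow x n (k + 1) + x ^ (n + 1) * esymmPow x n k := rfl

lemma esymmPow_eq_zero_of_lt {n k : ℕ} (h : n < k) : esymmPow x n k = 0 := by
  obtain ⟨k, rfl⟩ := Nat.exists_eq_add_one_of_ne_zero (n := k) (by omega)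
  induction n generalizing k with
  | zero => rfl
  | succ n ih =>
    obtain ⟨k, rfl⟩ := Nat.exists_eq_add_one_of_ne_zero (n := k) (by omega)
    rw [esymmPow_succ_succ, ih (k + 1) (by omega), ih k (by omega), mul_zero, add_zero]

/-- Factor `x` out of every variable: `e_{k+1}(x, …, x^{n+1}) = x^{k+1} e_{k+1}(1, x, …, xⁿ)`. -/
lemma esymmPow_succ_succ' (n k : ℕ) :
    esymmPow x (n + 1) (k + 1) = x ^ (k + 1) * (esymmPow x n k + esymmPow x n (k + 1)) := by
  induction n generalizing k with
  | zero => cases k <;> simp [esymmPow_succ_succ]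
  | succ n ih =>
    cases k with
    | zero =>
      conv_lhs => rw [esymmPow_succ_succ x (n + 1), ih]
      rw [esymmPow_succ_succ x n]
      simp only [esymmPow_zero_right]
      ring
    | succ k =>
      conv_lhs => rw [esymmPow_succ_succ x (n + 1), ih, ih]
      rw [esymmPow_succ_succ x n, esymmPow_succ_succ x n]
      ring

lemma sum_range_esymmPow (n : ℕ) :
    ∑ k ∈ range (n + 1), esymmPow x n k = ∏ j ∈ range n, (1 + x ^ (j + 1)) := by
  induction n with
  | zero => simp
  | succ n ih =>
    have hshift :
        ∑ k ∈ range (n + 1), esymmPow x n (k + 1) + 1 = ∑ k ∈ range (n + 1), esymmPow x n k := by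
      rw [← esymmPow_zero_right x n, ← sum_range_succ', sum_range_succ,
        esymmPow_eq_zero_of_lt x (Nat.lt_succ_self n), add_zero]
    rw [sum_range_succ', prod_range_succ, ← ih]
    simp only [esymmPow_succ_succ, sum_add_distrib, ← mul_sum, esymmPow_zero_right]
    rw [add_right_comm, hshift, ih]; ring

end CommSemiring

section Normed

variable {R : Type*} [NormedCommRing R] [NormOneClass R]

lemma norm_esymmPow_le (x : R) (n k : ℕ) : ‖esymmPow x n k‖ ≤ esymmPow ‖x‖ n k := by
  induction n generalizing k with
  | zero => cases k <;> simp
  | succ n ih =>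
    cases k with
    | zero => simp
    | succ k =>
      rw [esymmPow_succ_succ, esymmPow_succ_succ]
      calc ‖esymmPow x n (k + 1) + x ^ (n + 1) * esymmPow x n k‖
          ≤ ‖esymmPow x n (k + 1)‖ + ‖x ^ (n + 1)‖ * ‖esymmPow x n k‖ :=
            (norm_add_le _ _).trans (by gcongr; exact norm_mul_le _ _)
        _ ≤ esymmPow ‖x‖ n (k + 1) + ‖x‖ ^ (n + 1) * esymmPow ‖x‖ n k := by
            gcongr
            · exact ih _
            · exact norm_pow_le _ _
            · exact ih _

lemma sum_range_norm_esymmPow_le {x : R} (hx : ‖x‖ < 1) (n : ℕ) :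
    ∑ k ∈ range (n + 1), ‖esymmPow x n k‖ ≤ Real.exp (‖x‖ / (1 - ‖x‖)) := by
  calc ∑ k ∈ range (n + 1), ‖esymmPow x n k‖
      ≤ ∑ k ∈ range (n + 1), esymmPow ‖x‖ n k :=
        sum_le_sum fun k _ ↦ norm_esymmPow_le x n k
    _ = ∏ j ∈ range n, (1 + ‖x‖ ^ (j + 1)) := sum_range_esymmPow _ n
    _ ≤ Real.exp (∑ j ∈ range n, ‖x‖ ^ (j + 1)) :=
        Real.prod_one_add_le_exp_sum _ fun j ↦ by positivity
    _ ≤ Real.exp (‖x‖ / (1 - ‖x‖)) := by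
        have h := geom_sum_Ico_le_of_lt_one (m := 1) (n := n + 1) (norm_nonneg x) hx
        simp only [sum_Ico_eq_sum_range, add_tsub_cancel_right, pow_one, add_comm 1] at h
        gcongr

lemma summable_pow_mul_esymmPow [CompleteSpace R] {z x : R} (hz : ‖z‖ < 1) (hx : ‖x‖ < 1) :
    Summable (Function.uncurry fun n k ↦ z ^ n * esymmPow x n k) := by
  refine Summable.of_norm <|
    (summable_prod_of_nonneg fun _ ↦ norm_nonneg _).2 ⟨fun n ↦ ?_, ?_⟩
  · refine summable_of_ne_finset_zero (s := range (n + 1)) fun k hk ↦ ?_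
    rw [Function.uncurry_apply_pair, esymmPow_eq_zero_of_lt x (by simpa using hk), mul_zero,
      norm_zero]
  · refine Summable.of_nonneg_of_le (fun n ↦ tsum_nonneg fun k ↦ norm_nonneg _) (fun n ↦ ?_)
      ((summable_geometric_of_lt_one (norm_nonneg z) hz).mul_right (Real.exp (‖x‖ / (1 - ‖x‖))))
    rw [tsum_eq_sum (s := range (n + 1)) fun k hk ↦ by
      rw [Function.uncurry_apply_pair, esymmPow_eq_zero_of_lt x (by simpa using hk), mul_zero,
        norm_zero]]
    calc ∑ k ∈ range (n + 1), ‖z ^ n * esymmPow x n k‖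
        ≤ ∑ k ∈ range (n + 1), ‖z‖ ^ n * ‖esymmPow x n k‖ :=
          sum_le_sum fun k _ ↦ (norm_mul_le _ _).trans (by gcongr; exact norm_pow_le _ _)
      _ ≤ ‖z‖ ^ n * Real.exp (‖x‖ / (1 - ‖x‖)) := by
          rw [← mul_sum]; gcongr; exact sum_range_norm_esymmPow_le hx n

end Normed

lemma qPoch_succ (a b : ℂ) (n : ℕ) : qPoch a b (n + 1) = qPoch a b n * (1 - a * b ^ n) :=
  prod_range_succ _ n

lemma qPoch_ne_zero {a b : ℂ} (ha : ‖a‖ < 1) (hb : ‖b‖ ≤ 1) (n : ℕ) :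
    qPoch a b n ≠ 0 := by
  refine prod_ne_zero_iff.2 fun j _ ↦ sub_ne_zero.2 fun h ↦ ?_
  have : ‖a * b ^ j‖ < 1 := by
    rw [norm_mul, norm_pow]
    exact mul_lt_one_of_nonneg_of_lt_one_left (norm_nonneg a) ha (pow_le_one₀ (norm_nonneg b) hb)
  simp [← h] at this

lemma qPoch_neg_self (x : ℂ) (n : ℕ) :
    qPoch (-x) x n = ∏ j ∈ range n, (1 + x ^ (j + 1)) := by
  simp only [qPoch, pow_succ']
  ring_nf

lemma tsum_pow_mul_esymmPow {z x : ℂ} (hz : ‖z‖ < 1) (hx : ‖x‖ < 1) (k : ℕ) :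
    ∑' n, z ^ n * esymmPow x n k = z ^ k * x ^ (k + 1).choose 2 / qPoch z x (k + 1) := by
  have hcol (k : ℕ) : Summable fun n ↦ z ^ n * esymmPow x n k :=
    (summable_pow_mul_esymmPow hz hx).prod_symm.prod_factor k
  induction k with
  | zero => simp [tsum_geometric_of_norm_lt_one hz, qPoch, div_eq_mul_inv]
  | succ k ih =>
    have hrec : ∑' n, z ^ n * esymmPow x n (k + 1)
        = z * x ^ (k + 1) *
          (∑' n, z ^ n * esymmPow x n k + ∑' n, z ^ n * esymmPow x n (k + 1)) := by
      conv_lhs => rw [(hcol (k + 1)).tsum_eq_zero_add, esymmPow_zero_succ, mul_zero, zero_add]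
      rw [← (hcol k).tsum_add (hcol (k + 1)), ← tsum_mul_left]
      congr 1 with n
      rw [esymmPow_succ_succ']
      ring
    have hchoose : (k + 2).choose 2 = (k + 1).choose 2 + (k + 1) := by
      rw [Nat.choose_succ_succ', Nat.choose_one_right, add_comm]
    have hP := qPoch_ne_zero hz hx.le (k + 1)
    have hne : 1 - z * x ^ (k + 1) ≠ 0 :=
      right_ne_zero_of_mul (qPoch_succ z x (k + 1) ▸ qPoch_ne_zero hz hx.le (k + 2))
    rw [ih] at hrec
    rw [qPoch_succ, hchoose, eq_div_iff (mul_ne_zero hP hne)]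
    field_simp at hrec
    linear_combination hrec

theorem psi_eulerian_eq_alt (q : ℂ) (hq : ‖q‖ < 1) :
    ∑' n : ℕ, q ^ ((n + 1) ^ 2) / qPoch q (q ^ 2) (n + 1)
      = ∑' n : ℕ, q ^ (n + 1) * qPoch (-q ^ 2) (q ^ 2) n := by
  have hq2 : ‖q ^ 2‖ < 1 := by rw [norm_pow]; exact pow_lt_one₀ (norm_nonneg q) hq two_ne_zero
  have hexp (k : ℕ) : (k + 1) ^ 2 = 1 + k + 2 * (k + 1).choose 2 := by
    have := Nat.add_one_mul_choose_eq k 1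
    simp only [Nat.choose_one_right] at this
    nlinarith
  calc ∑' k : ℕ, q ^ ((k + 1) ^ 2) / qPoch q (q ^ 2) (k + 1)
      = ∑' k, q * ∑' n, q ^ n * esymmPow (q ^ 2) n k := by
        congr 1 with k
        rw [tsum_pow_mul_esymmPow hq hq2, hexp, pow_add, pow_add, pow_mul]
        ring
    _ = q * ∑' n, ∑' k, q ^ n * esymmPow (q ^ 2) n k := by
        rw [tsum_mul_left, (summable_pow_mul_esymmPow hq hq2).tsum_comm]
    _ = ∑' n, q ^ (n + 1) * qPoch (-q ^ 2) (q ^ 2) n := by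
        rw [← tsum_mul_left]
        congr 1 with n
        rw [tsum_eq_sum (s := range (n + 1)) fun k hk ↦ by
          rw [esymmPow_eq_zero_of_lt _ (by simpa using hk), mul_zero],
          ← mul_sum, sum_range_esymmPow, qPoch_neg_self]
        ring
end

section
/- The function W(α) = ∫_0^∞ e^{−(3/2)αx²} · (cosh((5/2)αx) + cosh((1/2)αx)) / cosh(3αx) dx, for real α > 0, equals (π/(3α)) ∫_0^∞ e^{−π²u²/(6α)} · (cosh(5πu/6) + cosh(πu/6)) / cosh(πu) du. -/
open scoped Real

theorem W_integral_substitution (α : ℝ) (hα : 0 < α) :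
    (∫ x in Set.Ioi (0 : ℝ), Real.exp (-(3 / 2) * α * x ^ 2) *
        (Real.cosh ((5 / 2) * α * x) + Real.cosh ((1 / 2) * α * x)) / Real.cosh (3 * α * x))
      = (π / (3 * α)) * ∫ u in Set.Ioi (0 : ℝ), Real.exp (-(π ^ 2 * u ^ 2) / (6 * α)) *
          (Real.cosh (5 * π * u / 6) + Real.cosh (π * u / 6)) / Real.cosh (π * u) := by
  have hπ : (0:ℝ) < π := Real.pi_pos
  have hc : 0 < 3 * α / π := by positivity
  have h := MeasureTheory.integral_comp_mul_left_Ioi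
    (fun u => Real.exp (-(π ^ 2 * u ^ 2) / (6 * α)) *
      (Real.cosh (5 * π * u / 6) + Real.cosh (π * u / 6)) / Real.cosh (π * u)) 0 hc
  simp only [mul_zero, smul_eq_mul] at h
  have key : ∀ x : ℝ,
      Real.exp (-(π ^ 2 * (3 * α / π * x) ^ 2) / (6 * α)) *
        (Real.cosh (5 * π * (3 * α / π * x) / 6) + Real.cosh (π * (3 * α / π * x) / 6)) /
        Real.cosh (π * (3 * α / π * x))
      = Real.exp (-(3 / 2) * α * x ^ 2) *
        (Real.cosh ((5 / 2) * α * x) + Real.cosh ((1 / 2) * α * x)) / Real.cosh (3 * α * x) := by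
    intro x
    have h1 : π * (3 * α / π * x) = 3 * α * x := by field_simp
    have h2 : 5 * π * (3 * α / π * x) / 6 = 5 / 2 * α * x := by field_simp; ring
    have h3 : π * (3 * α / π * x) / 6 = 1 / 2 * α * x := by field_simp; ring
    have h4 : -(π ^ 2 * (3 * α / π * x) ^ 2) / (6 * α) = -(3 / 2) * α * x ^ 2 := by
      field_simp; ring
    rw [h2, h3, h4, h1]
  calc (∫ x in Set.Ioi (0 : ℝ), Real.exp (-(3 / 2) * α * x ^ 2) *
        (Real.cosh ((5 / 2) * α * x) + Real.cosh ((1 / 2) * α * x)) / Real.cosh (3 * α * x))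
      = ∫ x in Set.Ioi (0:ℝ), Real.exp (-(π ^ 2 * (3 * α / π * x) ^ 2) / (6 * α)) *
        (Real.cosh (5 * π * (3 * α / π * x) / 6) + Real.cosh (π * (3 * α / π * x) / 6)) /
        Real.cosh (π * (3 * α / π * x)) := by
        refine MeasureTheory.setIntegral_congr_fun measurableSet_Ioi fun x _ => (key x).symm
    _ = (3 * α / π)⁻¹ * ∫ u in Set.Ioi (0 : ℝ), Real.exp (-(π ^ 2 * u ^ 2) / (6 * α)) *
          (Real.cosh (5 * π * u / 6) + Real.cosh (π * u / 6)) / Real.cosh (π * u) := h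
    _ = _ := by rw [inv_div]
end

section
/- Composing Ramanujan's transformation formulas for φ and ψ yields W(π²/α) = (α/π)^{3/2} · W(α) for all α with Re α > 0, where W(α) = ∫_0^∞ e^{−(3/2)αx²}(cosh((5/2)αx) + cosh((1/2)αx))/cosh(3αx) dx. -/
open Complex
open scoped Real

/-- Ramanujan's mock theta function `φ(q) = ∑_{n≥0} q^{n²} / (-q²;q²)_n`. -/
noncomputable def phiF (q : ℂ) : ℂ := ∑' n : ℕ, q ^ (n ^ 2) / qPoch (-q ^ 2) (q ^ 2) n

/-- Ramanujan's mock theta function `ψ(q) = ∑_{n≥1} q^{n²} / (q;q²)_n`. -/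
noncomputable def psiF (q : ℂ) : ℂ := ∑' n : ℕ, q ^ ((n + 1) ^ 2) / qPoch q (q ^ 2) (n + 1)

/-- The Mordell-type integral `W(α)`. -/
noncomputable def Wc (α : ℂ) : ℂ :=
  ∫ x in Set.Ioi (0 : ℝ), Complex.exp (-(3 / 2) * α * (x : ℂ) ^ 2) *
    (Complex.cosh ((5 / 2) * α * (x : ℂ)) + Complex.cosh ((1 / 2) * α * (x : ℂ))) /
    Complex.cosh (3 * α * (x : ℂ))

/-!
Apply the `φ`-transformation at `α` and the `ψ`-transformation at `β = π²/α`, whose dual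
variable `π²/β` is `α` again. Since `Re (α/π) > 0`, principal powers of `c · (α/π)^{±1}` split
off the positive constant `c`, so with `u = (α/π)^{1/2}` every square root in the two formulas is
a constant times `u` or `u⁻¹`. Eliminating the `ψ`-term leaves `√6 W(β) = √6 u³ W(α)`.
-/

theorem Complex.ofReal_mul_cpow {c : ℝ} (hc : 0 ≤ c) (z w : ℂ) :
    ((c : ℂ) * z) ^ w = (c : ℂ) ^ w * z ^ w := by
  rcases eq_or_ne w 0 with rfl | hw
  · simp
  rcases hc.eq_or_lt with rfl | hc
  · simp [zero_cpow hw]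
  rcases eq_or_ne z 0 with rfl | hz
  · simp [zero_cpow hw]
  have hc' : (c : ℂ) ≠ 0 := ofReal_ne_zero.mpr hc.ne'
  rw [cpow_def_of_ne_zero (mul_ne_zero hc' hz), log_ofReal_mul hc hz, ofReal_log hc.le, add_mul,
    exp_add, ← cpow_def_of_ne_zero hc', ← cpow_def_of_ne_zero hz]

theorem Complex.ofReal_div_cpow {c : ℝ} (hc : 0 ≤ c) {z : ℂ} (hz : z.arg ≠ π) (w : ℂ) :
    ((c : ℂ) / z) ^ w = (c : ℂ) ^ w / z ^ w := by
  rw [div_eq_mul_inv, ofReal_mul_cpow hc, inv_cpow _ _ hz, div_eq_mul_inv]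

theorem Complex.ofReal_cpow_one_half {c : ℝ} (hc : 0 ≤ c) : (c : ℂ) ^ (1 / 2 : ℂ) = √c := by
  rw [Real.sqrt_eq_rpow, ofReal_cpow hc]
  norm_num

theorem Complex.cpow_three_halves (z : ℂ) : z ^ (3 / 2 : ℂ) = (z ^ (1 / 2 : ℂ)) ^ 3 := by
  rw [← cpow_nat_mul]
  norm_num

theorem Complex.arg_ne_pi_of_re_pos {z : ℂ} (hz : 0 < z.re) : z.arg ≠ π :=
  (arg_lt_pi_iff.mpr (Or.inl hz.le)).ne

section Transformation

variable {α : ℂ}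

lemma re_div_pi_pos (hα : 0 < α.re) : 0 < (α / π).re := by
  rw [div_ofReal_re]
  positivity

lemma re_pi_sq_div_pos (hα : 0 < α.re) : 0 < ((π : ℂ) ^ 2 / α).re := by
  have hα0 : α ≠ 0 := fun h => by simp [h] at hα
  rw [div_re, ← ofReal_pow, ofReal_re, ofReal_im, zero_mul, zero_div, add_zero]
  have := normSq_pos.mpr hα0
  positivity

lemma cpow_one_half_four_pi_div (hα : 0 < α.re) :
    (4 * π / α) ^ (1 / 2 : ℂ) = 2 / (α / π) ^ (1 / 2 : ℂ) := by
  have hπ : (π : ℂ) ≠ 0 := ofReal_ne_zero.mpr Real.pi_ne_zero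
  rw [show 4 * π / α = ((4 : ℝ) : ℂ) / (α / π) by push_cast; field_simp,
    ofReal_div_cpow (by norm_num) (arg_ne_pi_of_re_pos (re_div_pi_pos hα)),
    ofReal_cpow_one_half (by norm_num)]
  norm_num

lemma cpow_one_half_six_mul_div_pi :
    (6 * α / π) ^ (1 / 2 : ℂ) = √6 * (α / π) ^ (1 / 2 : ℂ) := by
  rw [mul_div_assoc, ← ofReal_ofNat, ofReal_mul_cpow (by norm_num),
    ofReal_cpow_one_half (by norm_num)]

lemma cpow_one_half_pi_div_four_mul (hα : α ≠ 0) :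
    (π / (4 * (π ^ 2 / α))) ^ (1 / 2 : ℂ) = (α / π) ^ (1 / 2 : ℂ) / 2 := by
  have hπ : (π : ℂ) ≠ 0 := ofReal_ne_zero.mpr Real.pi_ne_zero
  rw [show π / (4 * (π ^ 2 / α)) = ((1 / 4 : ℝ) : ℂ) * (α / π) by push_cast; field_simp,
    ofReal_mul_cpow (by norm_num), ofReal_cpow_one_half (by norm_num)]
  norm_num
  ring

lemma cpow_one_half_three_mul_div_two_pi (hα : 0 < α.re) :
    (3 * (π ^ 2 / α) / (2 * π)) ^ (1 / 2 : ℂ) = √6 / (2 * (α / π) ^ (1 / 2 : ℂ)) := by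
  have hπ : (π : ℂ) ≠ 0 := ofReal_ne_zero.mpr Real.pi_ne_zero
  rw [show 3 * (π ^ 2 / α) / (2 * π) = ((6 / 2 ^ 2 : ℝ) : ℂ) / (α / π) by
      push_cast; field_simp; ring,
    ofReal_div_cpow (by norm_num) (arg_ne_pi_of_re_pos (re_div_pi_pos hα)),
    ofReal_cpow_one_half (by norm_num), Real.sqrt_div' _ (by norm_num), Real.sqrt_sq zero_le_two]
  push_cast
  ring

end Transformation

-- `q ^ (-1/24) * f q` at `q = exp (-α)`
noncomputable def qNormalized (f : ℂ → ℂ) (α : ℂ) : ℂ := exp (α / 24) * f (exp (-α))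

lemma qNormalized_pi_sq_div (f : ℂ → ℂ) (α : ℂ) :
    qNormalized f (π ^ 2 / α) = exp (π ^ 2 / (24 * α)) * f (exp (-π ^ 2 / α)) := by
  rw [qNormalized, div_div, mul_comm α, neg_div]

theorem W_functional_equation
    (h1 : ∀ α : ℂ, 0 < α.re →
      Complex.exp (α / 24) * phiF (Complex.exp (-α))
        = (4 * (π : ℂ) / α) ^ (1 / 2 : ℂ) * Complex.exp ((π : ℂ) ^ 2 / (24 * α)) *
            psiF (Complex.exp (-(π : ℂ) ^ 2 / α)) + (6 * α / (π : ℂ)) ^ (1 / 2 : ℂ) * Wc α)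
    (h2 : ∀ α : ℂ, 0 < α.re →
      Complex.exp (α / 24) * psiF (Complex.exp (-α))
        = ((π : ℂ) / (4 * α)) ^ (1 / 2 : ℂ) * Complex.exp ((π : ℂ) ^ 2 / (24 * α)) *
            phiF (Complex.exp (-(π : ℂ) ^ 2 / α)) - (3 * α / (2 * (π : ℂ))) ^ (1 / 2 : ℂ) * Wc α)
    (α : ℂ) (hα : 0 < α.re) :
    Wc ((π : ℂ) ^ 2 / α) = (α / (π : ℂ)) ^ (3 / 2 : ℂ) * Wc α := by
  have hα0 : α ≠ 0 := fun h => by simp [h] at hα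
  set u := (α / π) ^ (1 / 2 : ℂ)
  have hu : u ≠ 0 := by simp [u, cpow_eq_zero_iff, hα0, Real.pi_ne_zero]
  have hφ : qNormalized phiF α = 2 / u * qNormalized psiF (π ^ 2 / α) + √6 * u * Wc α := by
    rw [qNormalized, h1 α hα, qNormalized_pi_sq_div, cpow_one_half_four_pi_div hα,
      cpow_one_half_six_mul_div_pi, mul_assoc]
  have hψ : qNormalized psiF (π ^ 2 / α)
      = u / 2 * qNormalized phiF α - √6 / (2 * u) * Wc (π ^ 2 / α) := by
    have hπ : (π : ℂ) ^ 2 ≠ 0 := pow_ne_zero 2 (ofReal_ne_zero.mpr Real.pi_ne_zero)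
    rw [qNormalized, h2 _ (re_pi_sq_div_pos hα), mul_assoc, ← qNormalized_pi_sq_div,
      div_div_cancel₀ hπ, cpow_one_half_pi_div_four_mul hα0, cpow_one_half_three_mul_div_two_pi hα]
  have h6 : (√6 : ℂ) ≠ 0 := by norm_num
  rw [cpow_three_halves]
  field_simp at hφ hψ
  refine mul_left_cancel₀ h6 ?_
  linear_combination u * hφ + hψ
end
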